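/- For every real α with 0 ≤ α < 1 and every t > 0 one has Γ(α+1)·(2/t)^α·J_α(t) ≥ J_α(j_{α+1}). -/

import Mathlib

/-!
Write `Ω_ν(t) = Γ(ν+1) (2/t)^ν J_ν(t) = Σ (-1)^m Γ(ν+1) / (m! Γ(m+ν+1)) (t/2)^(2m)`, an entire even
function with `Ω_ν(0) = 1`. Termwise, `Ω_ν' = -t/(2(ν+1)) Ω_{ν+1}` and
`Ω_ν - Ω_{ν+1} = -t²/(4(ν+1)(ν+2)) Ω_{ν+2}`.

Let `j` be the first positive zero of `Ω_{ν+1}`, i.e. of `J_{ν+1}`. On `[0, j]` the derivative of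
`Ω_ν` is `≤ 0`, so `Ω_ν` decreases there. Since `Ω_{ν+1}` drops to `0` at `j`, its derivative
`-j/(2(ν+2)) Ω_{ν+2}(j)` is `≤ 0`, and the recurrence turns this into `Ω_ν(j) ≤ 0`. Beyond `j`,
the energy `Ω_ν² + Ω_ν'²` has derivative `-(2ν+1)(2/t) Ω_ν'² ≤ 0` and `Ω_ν'(j) = 0`, so
`Ω_ν(t)² ≤ Ω_ν(j)²`. Hence `j` is a global minimum of `Ω_ν` on `[0, ∞)`.

Finally `J_α(j) = (j/2)^α / Γ(α+1) · Ω_α(j) ≤ Ω_α(j)`, because `Ω_α(j) ≤ 0` and the factor is at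
least `1`: `Γ(α+1) ≤ 1` by convexity of `Γ`, and `j ≥ 2` because the alternating series for
`Ω_{α+1}(t)` stays positive while `t² < 4(α+2)`.
-/

/-- The Bessel function of the first kind of order `ν`,
`J_ν(t) = Σ_{m=0}^∞ (-1)^m / (m!·Γ(m+ν+1)) · (t/2)^{2m+ν}` (for `t > 0`,
using real powers). -/
noncomputable def besselJ (ν : ℝ) (t : ℝ) : ℝ :=
  ∑' m : ℕ, ((-1 : ℝ) ^ m / ((Nat.factorial m) * Real.Gamma ((m : ℝ) + ν + 1))) *
    (t / 2) ^ (2 * (m : ℝ) + ν)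

open Real Set
open scoped Nat

theorem factorial_mul_Gamma_le_Gamma {ν : ℝ} (hν : 0 ≤ ν) :
    ∀ m : ℕ, (m ! : ℝ) * Gamma (ν + 1) ≤ Gamma (m + ν + 1)
  | 0 => by simp
  | m + 1 => by
    have hΓ : 0 ≤ Gamma (m + ν + 1) := (Gamma_pos_of_pos (by positivity)).le
    calc ((m + 1) ! : ℝ) * Gamma (ν + 1) = (m + 1) * (m ! * Gamma (ν + 1)) := by
          push_cast [Nat.factorial_succ]; ring
      _ ≤ (m + ν + 1) * Gamma (m + ν + 1) := by
          gcongr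
          · linarith
          · exact factorial_mul_Gamma_le_Gamma hν m
      _ = Gamma ((m + 1 : ℕ) + ν + 1) := by
          rw [show ((m + 1 : ℕ) : ℝ) + ν + 1 = (m + ν + 1) + 1 by push_cast; ring,
            Gamma_add_one (by positivity : (m : ℝ) + ν + 1 ≠ 0)]

theorem Gamma_add_one_le_one {α : ℝ} (h0 : 0 ≤ α) (h1 : α ≤ 1) : Gamma (α + 1) ≤ 1 := by
  have h := convexOn_Gamma.2 (mem_Ioi.2 one_pos) (mem_Ioi.2 two_pos)
    (sub_nonneg.2 h1) h0 (sub_add_cancel 1 α)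
  simp only [smul_eq_mul] at h
  rw [show (1 - α) * 1 + α * 2 = α + 1 by ring, Gamma_one, Gamma_two] at h
  linarith

theorem IsMinOn.hasDerivAt_nonpos_of_Icc {f : ℝ → ℝ} {a b f' : ℝ} (hab : a < b)
    (hmin : IsMinOn f (Icc a b) b) (hf : HasDerivAt f f' b) : f' ≤ 0 := by
  have h := hmin.localize.hasFDerivWithinAt_nonneg hf.hasFDerivAt.hasFDerivWithinAt
    (sub_mem_posTangentConeAt_of_segment_subset
      ((convex_Icc a b).segment_subset (right_mem_Icc.2 hab.le) (left_mem_Icc.2 hab.le)))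
  simp only [ContinuousLinearMap.toSpanSingleton_apply, smul_eq_mul] at h
  exact nonpos_of_mul_nonneg_right h (sub_neg.2 hab)

section PowerSeries

variable {c : ℕ → ℝ}

theorem summable_mul_pow_two_mul (hc : ∀ m, |c m| ≤ ((m ! : ℝ) ^ 2)⁻¹) (t : ℝ) :
    Summable fun m => c m * t ^ (2 * m) := by
  refine .of_norm_bounded (Real.summable_pow_div_factorial (t ^ 2)) fun m => ?_
  have hf : (1 : ℝ) ≤ m ! := by exact_mod_cast m.factorial_pos
  rw [norm_mul, norm_pow, Real.norm_eq_abs, Real.norm_eq_abs, pow_mul, sq_abs, div_eq_inv_mul]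
  gcongr
  exact (hc m).trans (inv_anti₀ (by positivity) (le_self_pow₀ hf two_ne_zero))

theorem norm_mul_deriv_pow_two_mul_le (hc : ∀ m, |c m| ≤ ((m ! : ℝ) ^ 2)⁻¹) {R y : ℝ}
    (hR : 1 ≤ R) (hy : |y| ≤ R) (m : ℕ) :
    ‖c m * ((2 * m : ℕ) * y ^ (2 * m - 1))‖ ≤ 2 * ((R ^ 2) ^ m / m !) := by
  have hf : (0 : ℝ) < m ! := by positivity
  have hm : (m : ℝ) ≤ m ! := by exact_mod_cast m.self_le_factorial
  have hpow : |y| ^ (2 * m - 1) ≤ (R ^ 2) ^ m := by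
    rw [← pow_mul]
    exact (pow_le_pow_left₀ (abs_nonneg y) hy _).trans (pow_le_pow_right₀ hR (Nat.sub_le _ _))
  rw [norm_mul, norm_mul, norm_pow, Real.norm_eq_abs, Real.norm_eq_abs, Real.norm_eq_abs,
    Nat.abs_cast]
  calc |c m| * ((2 * m : ℕ) * |y| ^ (2 * m - 1))
      ≤ ((m ! : ℝ) ^ 2)⁻¹ * (2 * m ! * (R ^ 2) ^ m) := by
        push_cast
        gcongr
        exact hc m
    _ = 2 * ((R ^ 2) ^ m / m !) := by field_simp

theorem hasDerivAt_tsum_mul_pow_two_mul (hc : ∀ m, |c m| ≤ ((m ! : ℝ) ^ 2)⁻¹) (x : ℝ) :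
    HasDerivAt (fun t => ∑' m, c m * t ^ (2 * m))
      (∑' m, c m * ((2 * m : ℕ) * x ^ (2 * m - 1))) x := by
  set R := |x| + 1
  have hR : 1 ≤ R := by simp [R]
  exact hasDerivAt_tsum_of_isPreconnected
    ((Real.summable_pow_div_factorial (R ^ 2)).mul_left 2) isOpen_Ioo isPreconnected_Ioo
    (fun m y _ => (hasDerivAt_pow (2 * m) y).const_mul (c m))
    (fun m y hy => norm_mul_deriv_pow_two_mul_le hc hR (abs_le.2 ⟨hy.1.le, hy.2.le⟩) m)
    (y₀ := 0) ⟨by linarith, by linarith⟩ (summable_mul_pow_two_mul hc 0)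
    ⟨by linarith [neg_abs_le x], by linarith [le_abs_self x]⟩

end PowerSeries

noncomputable def besselOmegaCoeff (ν : ℝ) (m : ℕ) : ℝ :=
  (-1) ^ m * Gamma (ν + 1) / (m ! * Gamma (m + ν + 1) * 4 ^ m)

/-- The normalized Bessel function `Ω_ν`, as a power series so that it is smooth on all of `ℝ`
(see `Gamma_mul_rpow_mul_besselJ`). -/
noncomputable def besselOmega (ν t : ℝ) : ℝ :=
  ∑' m : ℕ, besselOmegaCoeff ν m * t ^ (2 * m)

/-- `Ω_ν² + (Ω_ν')²`, by `hasDerivAt_besselOmega`. -/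
noncomputable def besselOmegaEnergy (ν y : ℝ) : ℝ :=
  besselOmega ν y ^ 2 + (y / (2 * (ν + 1)) * besselOmega (ν + 1) y) ^ 2

section BesselOmega

variable {ν j : ℝ}

theorem abs_besselOmegaCoeff_le (hν : 0 ≤ ν) (m : ℕ) :
    |besselOmegaCoeff ν m| ≤ ((m ! : ℝ) ^ 2)⁻¹ := by
  have hΓ : 0 < Gamma (ν + 1) := Gamma_pos_of_pos (by positivity)
  have hΓm : 0 < Gamma (m + ν + 1) := Gamma_pos_of_pos (by positivity)
  have h4 : (1 : ℝ) ≤ 4 ^ m := one_le_pow₀ (by norm_num)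
  have hf : (0 : ℝ) < m ! := by positivity
  rw [besselOmegaCoeff, abs_div, abs_mul, abs_pow, abs_neg, abs_one, one_pow, one_mul,
    abs_of_pos hΓ, abs_of_pos (by positivity), div_le_iff₀ (by positivity)]
  calc Gamma (ν + 1) = (m ! : ℝ)⁻¹ * (m ! * Gamma (ν + 1)) := by field_simp
    _ ≤ (m ! : ℝ)⁻¹ * (Gamma (m + ν + 1) * 4 ^ m) :=
        mul_le_mul_of_nonneg_left ((factorial_mul_Gamma_le_Gamma hν m).trans
          (le_mul_of_one_le_right hΓm.le h4)) (by positivity)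
    _ = ((m ! : ℝ) ^ 2)⁻¹ * (m ! * Gamma (m + ν + 1) * 4 ^ m) := by field_simp

theorem besselOmegaCoeff_zero (hν : -1 < ν) : besselOmegaCoeff ν 0 = 1 := by
  have hΓ : Gamma (ν + 1) ≠ 0 := (Gamma_pos_of_pos (by linarith)).ne'
  simp [besselOmegaCoeff, hΓ]

theorem besselOmegaCoeff_succ_mul (hν : -1 < ν) (m : ℕ) :
    besselOmegaCoeff ν (m + 1) * (2 * (m + 1)) = -besselOmegaCoeff (ν + 1) m / (2 * (ν + 1)) := by
  have hν1 : ν + 1 ≠ 0 := by linarith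
  have hm0 : 0 < (m : ℝ) + ν + 1 := by linarith [m.cast_nonneg (α := ℝ)]
  have hm : (m : ℝ) + ν + 1 ≠ 0 := hm0.ne'
  have hΓ : Gamma (ν + 1) ≠ 0 := (Gamma_pos_of_pos (by linarith)).ne'
  have hΓm : Gamma (m + ν + 1) ≠ 0 := (Gamma_pos_of_pos hm0).ne'
  rw [besselOmegaCoeff, besselOmegaCoeff, Gamma_add_one hν1,
    show ((m + 1 : ℕ) : ℝ) + ν + 1 = (m + ν + 1) + 1 by push_cast; ring, Gamma_add_one hm,
    show (m : ℝ) + (ν + 1) + 1 = (m + ν + 1) + 1 by ring, Gamma_add_one hm]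
  push_cast [Nat.factorial_succ]
  field_simp
  ring

theorem besselOmegaCoeff_succ_sub (hν : -1 < ν) (m : ℕ) :
    besselOmegaCoeff ν (m + 1) - besselOmegaCoeff (ν + 1) (m + 1) =
      -besselOmegaCoeff (ν + 2) m / (4 * (ν + 1) * (ν + 2)) := by
  have hν1 : ν + 1 ≠ 0 := by linarith
  have hν2 : ν + 1 + 1 ≠ 0 := by linarith
  have hν2' : ν + 2 ≠ 0 := by linarith
  have hm0 : 0 < (m : ℝ) + ν + 1 := by linarith [m.cast_nonneg (α := ℝ)]
  have hm : (m : ℝ) + ν + 1 ≠ 0 := hm0.ne'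
  have hm2 : (m : ℝ) + ν + 1 + 1 ≠ 0 := by linarith
  have hΓ : Gamma (ν + 1) ≠ 0 := (Gamma_pos_of_pos (by linarith)).ne'
  have hΓm : Gamma (m + ν + 1) ≠ 0 := (Gamma_pos_of_pos hm0).ne'
  rw [besselOmegaCoeff, besselOmegaCoeff, besselOmegaCoeff,
    show ν + 2 + 1 = ν + 1 + 1 + 1 by ring, Gamma_add_one hν2, Gamma_add_one hν1,
    show ((m + 1 : ℕ) : ℝ) + (ν + 1) + 1 = (m + ν + 1 + 1) + 1 by push_cast; ring,
    show (m : ℝ) + (ν + 2) + 1 = (m + ν + 1 + 1) + 1 by ring,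
    show ((m + 1 : ℕ) : ℝ) + ν + 1 = (m + ν + 1) + 1 by push_cast; ring,
    Gamma_add_one hm2, Gamma_add_one hm]
  push_cast [Nat.factorial_succ]
  field_simp
  ring

theorem summable_besselOmegaCoeff_mul_pow (hν : 0 ≤ ν) (t : ℝ) :
    Summable fun m => besselOmegaCoeff ν m * t ^ (2 * m) :=
  summable_mul_pow_two_mul (abs_besselOmegaCoeff_le hν) t

theorem besselOmega_zero (hν : -1 < ν) : besselOmega ν 0 = 1 := by
  rw [besselOmega, tsum_eq_single 0 fun m hm => by simp [hm]]
  simp [besselOmegaCoeff_zero hν]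

theorem hasDerivAt_besselOmega (hν : 0 ≤ ν) (x : ℝ) :
    HasDerivAt (besselOmega ν) (-(x / (2 * (ν + 1))) * besselOmega (ν + 1) x) x := by
  have hterm (m : ℕ) : besselOmegaCoeff ν (m + 1) * ((2 * (m + 1) : ℕ) * x ^ (2 * (m + 1) - 1)) =
      -(x / (2 * (ν + 1))) * (besselOmegaCoeff (ν + 1) m * x ^ (2 * m)) := by
    rw [show 2 * (m + 1) - 1 = 2 * m + 1 by omega, pow_succ]
    push_cast
    linear_combination (x ^ (2 * m) * x) * besselOmegaCoeff_succ_mul (by linarith) m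
  convert hasDerivAt_tsum_mul_pow_two_mul (abs_besselOmegaCoeff_le hν) x using 1
  · rfl
  rw [tsum_eq_zero_add' (((summable_besselOmegaCoeff_mul_pow (by linarith) x).mul_left _).congr
      fun m => (hterm m).symm), funext hterm, tsum_mul_left, besselOmega]
  simp

theorem continuous_besselOmega (hν : 0 ≤ ν) : Continuous (besselOmega ν) :=
  continuous_iff_continuousAt.2 fun x => (hasDerivAt_besselOmega hν x).continuousAt

theorem besselOmega_sub_besselOmega_add_one (hν : 0 ≤ ν) (x : ℝ) :
    besselOmega ν x - besselOmega (ν + 1) x =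
      -(x ^ 2 / (4 * (ν + 1) * (ν + 2))) * besselOmega (ν + 2) x := by
  have hterm (m : ℕ) :
      besselOmegaCoeff ν (m + 1) * x ^ (2 * (m + 1)) -
        besselOmegaCoeff (ν + 1) (m + 1) * x ^ (2 * (m + 1)) =
      -(x ^ 2 / (4 * (ν + 1) * (ν + 2))) * (besselOmegaCoeff (ν + 2) m * x ^ (2 * m)) := by
    rw [← sub_mul, besselOmegaCoeff_succ_sub (by linarith) m, show 2 * (m + 1) = 2 * m + 2 by ring,
      pow_add]
    ring
  rw [besselOmega, besselOmega, ← (summable_besselOmegaCoeff_mul_pow hν x).tsum_sub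
      (summable_besselOmegaCoeff_mul_pow (by linarith) x),
    tsum_eq_zero_add' (((summable_besselOmegaCoeff_mul_pow (by linarith) x).mul_left _).congr
      fun m => (hterm m).symm), funext hterm, tsum_mul_left, besselOmega,
    besselOmegaCoeff_zero (by linarith), besselOmegaCoeff_zero (by linarith)]
  simp

theorem hasDerivAt_besselOmegaEnergy (hν : 0 ≤ ν) (y : ℝ) :
    HasDerivAt (besselOmegaEnergy ν)
      (-((2 * ν + 1) * y / (2 * (ν + 1) ^ 2)) * besselOmega (ν + 1) y ^ 2) y := by
  have hΩ := hasDerivAt_besselOmega hν y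
  have hΩ₁ := hasDerivAt_besselOmega (by linarith : 0 ≤ ν + 1) y
  rw [show ν + 1 + 1 = ν + 2 by ring] at hΩ₁
  have hrec := besselOmega_sub_besselOmega_add_one hν y
  refine ((hΩ.fun_pow 2).fun_add ((((hasDerivAt_id' y).div_const (2 * (ν + 1))).fun_mul
    hΩ₁).fun_pow 2)).congr_deriv ?_
  have hν1 : ν + 1 ≠ 0 := by linarith
  have hν2 : ν + 2 ≠ 0 := by linarith
  simp only [Nat.cast_ofNat, Nat.add_one_sub_one, pow_one]
  field_simp at hrec ⊢
  linear_combination (-(besselOmega (ν + 1) y * y)) * hrec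

theorem besselOmega_pos (hν : 0 ≤ ν) {t : ℝ} (ht : t ^ 2 < 4 * (ν + 1)) :
    0 < besselOmega ν t := by
  set q := t ^ 2 / 4
  set a : ℕ → ℝ := fun m => Gamma (ν + 1) / (m ! * Gamma (m + ν + 1)) * q ^ m
  have hq : 0 ≤ q := by positivity
  have hq1 : q < ν + 1 := by simp only [q]; linarith
  have hΓ : 0 < Gamma (ν + 1) := Gamma_pos_of_pos (by linarith)
  have ha_nonneg (m : ℕ) : 0 ≤ a m := by
    have := Gamma_pos_of_pos (by positivity : (0 : ℝ) < m + ν + 1)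
    positivity
  have ha_succ (m : ℕ) : a (m + 1) = a m * (q / ((m + 1) * (m + ν + 1))) := by
    have hm : (m : ℝ) + ν + 1 ≠ 0 := by positivity
    have := (Gamma_pos_of_pos (by positivity : (0 : ℝ) < m + ν + 1)).ne'
    simp only [a]
    rw [show ((m + 1 : ℕ) : ℝ) + ν + 1 = (m + ν + 1) + 1 by push_cast; ring, Gamma_add_one hm]
    push_cast [Nat.factorial_succ]
    field_simp
    ring
  have ha : Antitone a := antitone_nat_of_succ_le fun m => by
    rw [ha_succ]
    refine mul_le_of_le_one_right (ha_nonneg m) (div_le_one_of_le₀ ?_ (by positivity))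
    have hm : (0 : ℝ) ≤ m := m.cast_nonneg
    nlinarith [mul_nonneg hm (by linarith : (0 : ℝ) ≤ m + ν + 1)]
  have hterm (m : ℕ) : besselOmegaCoeff ν m * t ^ (2 * m) = (-1) ^ m * a m := by
    have := (Gamma_pos_of_pos (by positivity : (0 : ℝ) < m + ν + 1)).ne'
    simp only [a, q, besselOmegaCoeff, pow_mul, div_pow]
    field_simp
  have hsum : HasSum (fun m => (-1) ^ m * a m) (besselOmega ν t) := by
    simpa only [besselOmega, hterm] using (summable_besselOmegaCoeff_mul_pow hν t).hasSum
  have hlow := ha.alternating_series_le_tendsto hsum.tendsto_sum_nat 1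
  have ha0 : a 0 = 1 := by simp [a, hΓ.ne']
  have ha1 : a 1 = q / (ν + 1) := by simp [ha_succ 0, ha0]
  have hq2 : q / (ν + 1) < 1 := (div_lt_one (by linarith)).2 hq1
  rw [Finset.sum_range_succ, Finset.sum_range_one, ha0, ha1] at hlow
  norm_num at hlow
  linarith

theorem antitoneOn_besselOmegaEnergy (hν : 0 ≤ ν) : AntitoneOn (besselOmegaEnergy ν) (Ici 0) := by
  refine antitoneOn_of_hasDerivWithinAt_nonpos (convex_Ici 0) ?_
    (fun y _ => (hasDerivAt_besselOmegaEnergy hν y).hasDerivWithinAt) fun y hy => ?_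
  · exact fun y _ => (hasDerivAt_besselOmegaEnergy hν y).continuousAt.continuousWithinAt
  · rw [interior_Ici] at hy
    have : 0 ≤ (2 * ν + 1) * y / (2 * (ν + 1) ^ 2) := by have := hy.out; positivity
    nlinarith [sq_nonneg (besselOmega (ν + 1) y)]

theorem besselJ_eq_besselOmega (hν : -1 < ν) {t : ℝ} (ht : 0 < t) :
    besselJ ν t = (t / 2) ^ ν / Gamma (ν + 1) * besselOmega ν t := by
  rw [besselJ, besselOmega, ← tsum_mul_left]
  congr 1
  ext m
  have hΓ := (Gamma_pos_of_pos (by linarith : 0 < ν + 1)).ne'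
  have hΓm := (Gamma_pos_of_pos (by linarith [m.cast_nonneg (α := ℝ)] : (0 : ℝ) < m + ν + 1)).ne'
  rw [rpow_add (by positivity), show 2 * (m : ℝ) = ((2 * m : ℕ) : ℝ) by push_cast; ring,
    rpow_natCast, besselOmegaCoeff, div_pow, pow_mul, pow_mul]
  field_simp
  norm_num

theorem setOf_besselJ_eq_zero (hν : -1 < ν) :
    {s | 0 < s ∧ besselJ ν s = 0} = {s | 0 < s ∧ besselOmega ν s = 0} := by
  ext s
  refine and_congr_right fun hs => ?_
  have hΓ := Gamma_pos_of_pos (by linarith : 0 < ν + 1)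
  rw [besselJ_eq_besselOmega hν hs, mul_eq_zero, or_iff_right (by positivity)]

theorem Gamma_mul_rpow_mul_besselJ (hν : -1 < ν) {t : ℝ} (ht : 0 < t) :
    Gamma (ν + 1) * (2 / t) ^ ν * besselJ ν t = besselOmega ν t := by
  have hΓ := (Gamma_pos_of_pos (by linarith : 0 < ν + 1)).ne'
  rw [besselJ_eq_besselOmega hν ht, div_rpow (by norm_num) ht.le, div_rpow ht.le (by norm_num)]
  have : (t ^ ν) ≠ 0 := (rpow_pos_of_pos ht ν).ne'
  have : ((2 : ℝ) ^ ν) ≠ 0 := (rpow_pos_of_pos two_pos ν).ne'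
  field_simp

theorem besselOmega_add_one_pos_of_lt (hν : -1 ≤ ν)
    (hj : IsLeast {s | 0 < s ∧ besselOmega (ν + 1) s = 0} j) {s : ℝ} (hs : 0 ≤ s) (hsj : s < j) :
    0 < besselOmega (ν + 1) s := by
  by_contra! h
  have h0 : besselOmega (ν + 1) 0 = 1 := besselOmega_zero (by linarith)
  obtain ⟨c, hc, hc0⟩ := intermediate_value_Icc' hs
    (continuous_besselOmega (by linarith)).continuousOn ⟨h, by rw [h0]; exact zero_le_one⟩
  have hc_pos : 0 < c := hc.1.lt_of_ne (by rintro rfl; simp [h0] at hc0)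
  linarith [hj.2 ⟨hc_pos, hc0⟩, hc.2]

theorem two_le_of_isLeast (hν : -1 ≤ ν) (hj : IsLeast {s | 0 < s ∧ besselOmega (ν + 1) s = 0} j) :
    2 ≤ j := by
  by_contra! h
  have hj0 := hj.1.1
  exact (besselOmega_pos (by linarith) (by nlinarith)).ne' hj.1.2

theorem antitoneOn_besselOmega (hν : 0 ≤ ν)
    (hj : IsLeast {s | 0 < s ∧ besselOmega (ν + 1) s = 0} j) :
    AntitoneOn (besselOmega ν) (Icc 0 j) := by
  refine antitoneOn_of_hasDerivWithinAt_nonpos (convex_Icc 0 j)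
    (continuous_besselOmega hν).continuousOn
    (fun x _ => (hasDerivAt_besselOmega hν x).hasDerivWithinAt) fun x hx => ?_
  rw [interior_Icc] at hx
  have := besselOmega_add_one_pos_of_lt (by linarith) hj hx.1.le hx.2
  have := hx.1
  rw [neg_mul, neg_nonpos]
  positivity

theorem besselOmega_nonpos_of_isLeast (hν : 0 ≤ ν)
    (hj : IsLeast {s | 0 < s ∧ besselOmega (ν + 1) s = 0} j) : besselOmega ν j ≤ 0 := by
  obtain ⟨hj0, hjz⟩ := hj.1
  have hmin : IsMinOn (besselOmega (ν + 1)) (Icc 0 j) j := isMinOn_iff.2 fun s hs => by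
    rcases hs.2.lt_or_eq with hsj | rfl
    · exact hjz ▸ (besselOmega_add_one_pos_of_lt (by linarith) hj hs.1 hsj).le
    · exact le_rfl
  have hderiv := hmin.hasDerivAt_nonpos_of_Icc hj0 (hasDerivAt_besselOmega (by linarith) j)
  have hrec := besselOmega_sub_besselOmega_add_one hν j
  rw [show ν + 1 + 1 = ν + 2 by ring] at hderiv
  rw [hjz, sub_zero] at hrec
  rw [neg_mul, neg_nonpos] at hderiv
  have : 0 ≤ besselOmega (ν + 2) j :=
    (mul_nonneg_iff_of_pos_left (by positivity : 0 < j / (2 * (ν + 2)))).1 hderiv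
  rw [hrec, neg_mul, neg_nonpos]
  positivity

theorem isMinOn_besselOmega (hν : 0 ≤ ν)
    (hj : IsLeast {s | 0 < s ∧ besselOmega (ν + 1) s = 0} j) :
    IsMinOn (besselOmega ν) (Ici 0) j := by
  refine isMinOn_iff.2 fun x (hx : 0 ≤ x) => ?_
  have hj0 := hj.1.1
  rcases le_total x j with hxj | hjx
  · exact antitoneOn_besselOmega hν hj ⟨hx, hxj⟩ ⟨hj0.le, le_rfl⟩ hxj
  · have hsq : besselOmega ν x ^ 2 ≤ besselOmega ν j ^ 2 :=
      calc besselOmega ν x ^ 2 ≤ besselOmegaEnergy ν x := le_add_of_nonneg_right (sq_nonneg _)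
        _ ≤ besselOmegaEnergy ν j := antitoneOn_besselOmegaEnergy hν hj0.le hx hjx
        _ = besselOmega ν j ^ 2 := by simp [besselOmegaEnergy, hj.1.2]
    have habs := sq_le_sq.1 hsq
    rw [abs_of_nonpos (besselOmega_nonpos_of_isLeast hν hj)] at habs
    linarith [neg_abs_le (besselOmega ν x)]

end BesselOmega

/-- for `0 ≤ α < 1` and every `t > 0`,
`Γ(α+1)·(2/t)^α·J_α(t) ≥ J_α(j_{α+1})`, where `j_{α+1}` is the smallest
positive zero of the Bessel function `J_{α+1}`. -/
theorem bessel_omega_ge_value_at_zero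
    (α : ℝ) (h0 : 0 ≤ α) (h1 : α < 1) (t : ℝ) (ht : 0 < t) (j : ℝ)
    (hj : IsLeast {s : ℝ | 0 < s ∧ besselJ (α + 1) s = 0} j) :
    besselJ α j ≤ Real.Gamma (α + 1) * (2 / t) ^ α * besselJ α t := by
  rw [setOf_besselJ_eq_zero (by linarith)] at hj
  have hj2 : 2 ≤ j := two_le_of_isLeast (by linarith) hj
  have hΓ : 0 < Gamma (α + 1) := Gamma_pos_of_pos (by linarith)
  have hscale : 1 ≤ (j / 2) ^ α / Gamma (α + 1) :=
    (one_le_div hΓ).2 <| (Gamma_add_one_le_one h0 h1.le).trans <|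
      one_le_rpow (by linarith) h0
  rw [Gamma_mul_rpow_mul_besselJ (by linarith) ht, besselJ_eq_besselOmega (by linarith) hj.1.1]
  calc (j / 2) ^ α / Gamma (α + 1) * besselOmega α j ≤ besselOmega α j :=
        mul_le_of_one_le_left (besselOmega_nonpos_of_isLeast h0 hj) hscale
    _ ≤ besselOmega α t := isMinOn_besselOmega h0 hj ht.le
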